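/- For θ ∈ ℝ³ with 0 < |θ| < 2π, the 3×3 left Jacobian J(θ^∧) = Σ_{i≥0} (θ^∧)^i/(i+1)! equals (sin|θ|/|θ|) I + (1 − sin|θ|/|θ|) θθᵀ/|θ|² + ((1 − cos|θ|)/|θ|²) θ^∧. -/

import Mathlib

/-! Since `(θ^∧)³ = -|θ|² θ^∧`, odd powers of `θ^∧` collapse to `(-|θ|²)ᵏ θ^∧` and even ones to
`(-|θ|²)ᵏ (θ^∧)²`. Hence `J(θ^∧)` is `1` plus multiples of `θ^∧` and `(θ^∧)²` whose coefficients
are tails of the cosine and sine series at `|θ|`, and `(θ^∧)² = θθᵀ - |θ|² I`. -/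

/-- The hat map on `ℝ³`. -/
def hat (θ : Fin 3 → ℝ) : Matrix (Fin 3) (Fin 3) ℝ :=
  !![0, -θ 2, θ 1; θ 2, 0, -θ 0; -θ 1, θ 0, 0]

/-- `J(M) = ∑_{k≥0} M^k/(k+1)!`. -/
noncomputable def Jmat (M : Matrix (Fin 3) (Fin 3) ℝ) : Matrix (Fin 3) (Fin 3) ℝ :=
  ∑' k : ℕ, (((k + 1).factorial : ℝ))⁻¹ • M ^ k

open Real

lemma Real.hasSum_one_sub_cos_div_sq {t : ℝ} (ht : t ≠ 0) :
    HasSum (fun k : ℕ => ((2 * k + 2).factorial : ℝ)⁻¹ * (-t ^ 2) ^ k) ((1 - cos t) / t ^ 2) := by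
  have tail : HasSum (fun k : ℕ => (-1) ^ (k + 1) * t ^ (2 * (k + 1)) / (2 * (k + 1)).factorial)
      (cos t - 1) := by
    simpa using (hasSum_nat_add_iff' 1).mpr (Real.hasSum_cos t)
  rw [show (1 - cos t) / t ^ 2 = (cos t - 1) / -t ^ 2 by field_simp; ring]
  refine (tail.div_const _).congr_fun fun k => ?_
  rw [neg_pow, ← pow_mul, mul_add, pow_succ, pow_add]
  field_simp

lemma Real.hasSum_sub_sin_div_pow_three {t : ℝ} (ht : t ≠ 0) :
    HasSum (fun k : ℕ => ((2 * k + 3).factorial : ℝ)⁻¹ * (-t ^ 2) ^ k) ((t - sin t) / t ^ 3) := by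
  have tail : HasSum
      (fun k : ℕ => (-1) ^ (k + 1) * t ^ (2 * (k + 1) + 1) / (2 * (k + 1) + 1).factorial)
      (sin t - t) := by
    simpa using (hasSum_nat_add_iff' 1).mpr (Real.hasSum_sin t)
  rw [show (t - sin t) / t ^ 3 = (sin t - t) / -t ^ 3 by field_simp; ring]
  refine (tail.div_const _).congr_fun fun k => ?_
  rw [neg_pow, ← pow_mul, show 2 * (k + 1) + 1 = 2 * k + 3 by ring, pow_succ, pow_add]
  field_simp

section PowThree

variable {A : Type*} [Ring A] [Algebra ℝ A] {M : A} {c : ℝ}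

lemma pow_two_mul_add_one_of_pow_three (h : M ^ 3 = c • M) (k : ℕ) :
    M ^ (2 * k + 1) = c ^ k • M := by
  induction k with
  | zero => simp
  | succ k ih =>
    calc M ^ (2 * (k + 1) + 1) = M ^ (2 * k + 1) * M ^ 2 := by rw [← pow_add]; congr 1
      _ = c ^ k • M ^ 3 := by rw [ih, smul_mul_assoc, ← pow_succ']
      _ = c ^ (k + 1) • M := by rw [h, smul_smul, pow_succ]

lemma pow_two_mul_add_two_of_pow_three (h : M ^ 3 = c • M) (k : ℕ) :
    M ^ (2 * k + 2) = c ^ k • M ^ 2 := by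
  rw [pow_succ, pow_two_mul_add_one_of_pow_three h, smul_mul_assoc, sq]

theorem hasSum_inv_factorial_smul_pow_of_pow_three [TopologicalSpace A]
    [IsTopologicalAddGroup A] [ContinuousSMul ℝ A] {t : ℝ} (ht : t ≠ 0)
    (h : M ^ 3 = (-t ^ 2) • M) :
    HasSum (fun n : ℕ => ((n + 1).factorial : ℝ)⁻¹ • M ^ n)
      (1 + ((1 - cos t) / t ^ 2) • M + ((t - sin t) / t ^ 3) • M ^ 2) := by
  have odd : HasSum (fun k : ℕ => ((2 * k + 1 + 1).factorial : ℝ)⁻¹ • M ^ (2 * k + 1))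
      (((1 - cos t) / t ^ 2) • M) :=
    ((Real.hasSum_one_sub_cos_div_sq ht).smul_const M).congr_fun fun k => by
      rw [pow_two_mul_add_one_of_pow_three h, smul_smul]
  have even_tail :
      HasSum (fun k : ℕ => ((2 * (k + 1) + 1).factorial : ℝ)⁻¹ • M ^ (2 * (k + 1)))
        (((t - sin t) / t ^ 3) • M ^ 2) :=
    ((Real.hasSum_sub_sin_div_pow_three ht).smul_const (M ^ 2)).congr_fun fun k => by
      rw [mul_add, pow_two_mul_add_two_of_pow_three h, smul_smul]
  have even := (hasSum_nat_add_iff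
    (f := fun k : ℕ => ((2 * k + 1).factorial : ℝ)⁻¹ • M ^ (2 * k)) 1).mp even_tail
  rw [Finset.sum_range_one] at even
  convert HasSum.even_add_odd (f := fun n : ℕ => ((n + 1).factorial : ℝ)⁻¹ • M ^ n) even odd
    using 1
  simp only [mul_zero, zero_add, Nat.factorial_one, Nat.cast_one, inv_one, pow_zero, one_smul]
  abel

end PowThree

lemma hat_sq (θ : Fin 3 → ℝ) :
    hat θ ^ 2 = Matrix.vecMulVec θ θ - (∑ i, θ i ^ 2) • (1 : Matrix (Fin 3) (Fin 3) ℝ) := by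
  ext i j
  fin_cases i <;> fin_cases j <;>
    simp [hat, sq, Matrix.mul_apply, Matrix.vecMulVec, Fin.sum_univ_three] <;>
    ring

lemma hat_pow_three (θ : Fin 3 → ℝ) : hat θ ^ 3 = (-∑ i, θ i ^ 2) • hat θ := by
  ext i j
  fin_cases i <;> fin_cases j <;>
    simp [hat, pow_succ, Matrix.mul_apply, Fin.sum_univ_three] <;> ring

theorem left_jacobian_closed_form_general (θ : Fin 3 → ℝ)
    (h0 : 0 < Real.sqrt (∑ i, θ i ^ 2)) :
    Jmat (hat θ)
      = (Real.sin (Real.sqrt (∑ i, θ i ^ 2)) / Real.sqrt (∑ i, θ i ^ 2)) •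
          (1 : Matrix (Fin 3) (Fin 3) ℝ)
        + ((1 - Real.sin (Real.sqrt (∑ i, θ i ^ 2)) / Real.sqrt (∑ i, θ i ^ 2))
            / (Real.sqrt (∑ i, θ i ^ 2)) ^ 2) • Matrix.vecMulVec θ θ
        + ((1 - Real.cos (Real.sqrt (∑ i, θ i ^ 2))) / (Real.sqrt (∑ i, θ i ^ 2)) ^ 2) •
            hat θ := by
  set t := Real.sqrt (∑ i, θ i ^ 2)
  have ht : t ≠ 0 := h0.ne'
  have ht2 : t ^ 2 = ∑ i, θ i ^ 2 := Real.sq_sqrt (by positivity)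
  have hcube : hat θ ^ 3 = (-t ^ 2) • hat θ := by rw [ht2, hat_pow_three]
  rw [Jmat, (hasSum_inv_factorial_smul_pow_of_pow_three ht hcube).tsum_eq, hat_sq, ← ht2]
  have sin_coeff : sin t / t = 1 - (t - sin t) / t ^ 3 * t ^ 2 := by field_simp; ring
  have sq_coeff : (1 - sin t / t) / t ^ 2 = (t - sin t) / t ^ 3 := by field_simp
  rw [sq_coeff, sin_coeff]
  module

/-- For `θ ∈ ℝ³` with `0 < |θ| < 2π`, the left Jacobian satisfies
`J(θ^∧) = (sin|θ|/|θ|) I + (1 − sin|θ|/|θ|) θθᵀ/|θ|² + ((1 − cos|θ|)/|θ|²) θ^∧`. -/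
theorem left_jacobian_closed_form (θ : Fin 3 → ℝ)
    (h0 : 0 < Real.sqrt (∑ i, θ i ^ 2))
    (h2π : Real.sqrt (∑ i, θ i ^ 2) < 2 * Real.pi) :
    Jmat (hat θ)
      = (Real.sin (Real.sqrt (∑ i, θ i ^ 2)) / Real.sqrt (∑ i, θ i ^ 2)) •
          (1 : Matrix (Fin 3) (Fin 3) ℝ)
        + ((1 - Real.sin (Real.sqrt (∑ i, θ i ^ 2)) / Real.sqrt (∑ i, θ i ^ 2))
            / (Real.sqrt (∑ i, θ i ^ 2)) ^ 2) • Matrix.vecMulVec θ θ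
        + ((1 - Real.cos (Real.sqrt (∑ i, θ i ^ 2))) / (Real.sqrt (∑ i, θ i ^ 2)) ^ 2) •
            hat θ :=
  left_jacobian_closed_form_general θ h0
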